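/- arXiv:1608.00740 — 2 statements merged into one kernel-verified Lean document; each statement's English description precedes it below -/
import Mathlib

section
/- In the free Lie algebra on generators a and b, every element of the second term of the lower central series of the ideal generated by brackets (i.e., elements of the commutator subalgebra), modulo the double commutator, is a linear combination of the elements ad(a)^k ad(b)^l ([a,b]) for k, l ≥ 0. -/
noncomputable section

/-- The free Lie algebra over ℚ on two generators. -/
abbrev L : Type := FreeLieAlgebra ℚ Bool

/-- The generator `a`. -/
def ga : L := FreeLieAlgebra.of ℚ true
/-- The generator `b`. -/
def gb : L := FreeLieAlgebra.of ℚ false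

/-- `D¹L = [L, L]`, the commutator ideal. -/
def D1 : LieIdeal ℚ L := ⁅(⊤ : LieIdeal ℚ L), (⊤ : LieIdeal ℚ L)⁆
/-- `D²L = [[L,L],[L,L]]`, the double commutator. -/
def D2 : LieIdeal ℚ L := ⁅D1, D1⁆

/-- Iterated adjoint action: `adp x k y = ad(x)^k (y)`. -/
def adp (x : L) (k : ℕ) (y : L) : L := ((LieAlgebra.ad ℚ L x) ^ k) y

/-! Let `P = D²L + span {ad(a)^k ad(b)^l [a,b]}`. Then `ad a` maps `P` into itself by raising `k`,
and so does `ad b`, because on `D¹L` the operators `ad b` and `ad(a)^k` commute modulo `D²L`.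
Being stable under the adjoint action of the generators, `P` is a Lie ideal; it contains `[a,b]`,
so `L ⧸ P` is generated by two commuting elements, hence abelian, i.e. `D¹L ≤ P`. -/

section LieSpan

variable {R 𝔤 : Type*} [CommRing R] [LieRing 𝔤] [LieAlgebra R 𝔤] {s : Set 𝔤}

open LieSubalgebra

theorem Submodule.lie_mem_of_lieSpan_eq_top (hs : lieSpan R 𝔤 s = ⊤) {P : Submodule R 𝔤}
    (hP : ∀ g ∈ s, ∀ p ∈ P, ⁅g, p⁆ ∈ P) (x : 𝔤) {p : 𝔤} (hp : p ∈ P) :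
    ⁅x, p⁆ ∈ P := by
  have hx : x ∈ lieSpan R 𝔤 s := hs ▸ trivial
  induction hx using lieSpan_induction generalizing p with
  | mem g hg => exact hP g hg p hp
  | zero => simp
  | add x y _ _ hx hy => rw [add_lie]; exact P.add_mem (hx hp) (hy hp)
  | smul r x _ hx => rw [smul_lie]; exact P.smul_mem r (hx hp)
  | lie x y _ _ hx hy => rw [lie_lie]; exact P.sub_mem (hx (hy hp)) (hy (hx hp))

def Submodule.toLieIdealOfLieSpanEqTop (hs : lieSpan R 𝔤 s = ⊤) (P : Submodule R 𝔤)
    (hP : ∀ g ∈ s, ∀ p ∈ P, ⁅g, p⁆ ∈ P) : LieIdeal R 𝔤 :=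
  { P with lie_mem := fun {x _} hp => P.lie_mem_of_lieSpan_eq_top hs hP x hp }

theorem LieIdeal.lie_mem_of_lieSpan_eq_top (hs : lieSpan R 𝔤 s = ⊤) (I : LieIdeal R 𝔤) {x : 𝔤}
    (hx : ∀ g ∈ s, ⁅x, g⁆ ∈ I) (y : 𝔤) : ⁅x, y⁆ ∈ I := by
  have hy : y ∈ lieSpan R 𝔤 s := hs ▸ trivial
  induction hy using lieSpan_induction with
  | mem g hg => exact hx g hg
  | zero => simp
  | add y z _ _ hy hz => rw [lie_add]; exact I.add_mem hy hz
  | smul r y _ hy => rw [lie_smul]; exact I.smul_mem r hy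
  | lie y z _ _ hy hz =>
    rw [leibniz_lie]
    exact I.add_mem (lie_mem_left R 𝔤 I _ z hy) (I.lie_mem hz)

theorem LieIdeal.top_lie_top_le_of_lieSpan_eq_top (hs : lieSpan R 𝔤 s = ⊤) (I : LieIdeal R 𝔤)
    (hI : ∀ g ∈ s, ∀ h ∈ s, ⁅g, h⁆ ∈ I) : ⁅(⊤ : LieIdeal R 𝔤), ⊤⁆ ≤ I := by
  refine (LieSubmodule.lie_le_iff _ _ _).mpr fun x _ y _ =>
    I.lie_mem_of_lieSpan_eq_top hs (fun g hg => ?_) y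
  rw [← lie_skew]
  exact I.neg_mem (I.lie_mem_of_lieSpan_eq_top hs (hI g hg) x)

theorem LieIdeal.lie_mem_sup_span (I : LieIdeal R 𝔤) {S : Set 𝔤} {g : 𝔤}
    (hg : ∀ y ∈ S, ⁅g, y⁆ ∈ (I : Submodule R 𝔤) ⊔ Submodule.span R S) {p : 𝔤}
    (hp : p ∈ (I : Submodule R 𝔤) ⊔ Submodule.span R S) :
    ⁅g, p⁆ ∈ (I : Submodule R 𝔤) ⊔ Submodule.span R S := by
  have hstable : (I : Submodule R 𝔤) ⊔ Submodule.span R S ≤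
      ((I : Submodule R 𝔤) ⊔ Submodule.span R S).comap (LieAlgebra.ad R 𝔤 g) :=
    sup_le (fun _ hq => le_sup_left (a := (I : Submodule R 𝔤)) (I.lie_mem hq))
      (Submodule.span_le.mpr hg)
  exact hstable hp

end LieSpan

theorem FreeLieAlgebra.lieSpan_range_of (R X : Type*) [CommRing R] :
    LieSubalgebra.lieSpan R (FreeLieAlgebra R X) (Set.range (of R)) = ⊤ := by
  set K := LieSubalgebra.lieSpan R (FreeLieAlgebra R X) (Set.range (of R))
  let f : FreeLieAlgebra R X →ₗ⁅R⁆ K :=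
    lift R fun x => ⟨of R x, LieSubalgebra.subset_lieSpan ⟨x, rfl⟩⟩
  have hf : K.incl.comp f = LieHom.id := hom_ext fun x => by simp [f]
  refine eq_top_iff.mpr fun z _ => ?_
  rw [← show K.incl (f z) = z from LieHom.congr_fun hf z]
  exact (f z).2

section Commutation

variable {R 𝔤 : Type*} [CommRing R] [LieRing 𝔤] [LieAlgebra R 𝔤]

open LieAlgebra

theorem LieIdeal.ad_pow_apply_mem (I : LieIdeal R 𝔤) (x : 𝔤) (k : ℕ) {w : 𝔤} (hw : w ∈ I) :
    (ad R 𝔤 x ^ k) w ∈ I := by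
  rw [Module.End.coe_pow]
  exact Set.MapsTo.iterate (fun _ h => I.lie_mem h) k hw

theorem LieIdeal.lie_ad_pow_sub_ad_pow_lie_mem_lie (I : LieIdeal R 𝔤) {x y w : 𝔤}
    (hxy : ⁅x, y⁆ ∈ I) (hw : w ∈ I) (k : ℕ) :
    ⁅y, (ad R 𝔤 x ^ k) w⁆ - (ad R 𝔤 x ^ k) ⁅y, w⁆ ∈ ⁅I, I⁆ := by
  induction k with
  | zero => simp
  | succ k ih =>
    have hyx : ⁅y, x⁆ ∈ I := by rw [← lie_skew]; exact I.neg_mem hxy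
    set u := (ad R 𝔤 x ^ k) w
    have key : ⁅y, (ad R 𝔤 x ^ (k + 1)) w⁆ - (ad R 𝔤 x ^ (k + 1)) ⁅y, w⁆ =
        ⁅⁅y, x⁆, u⁆ + ⁅x, ⁅y, u⁆ - (ad R 𝔤 x ^ k) ⁅y, w⁆⁆ := by
      simp only [pow_succ', Module.End.mul_apply, ad_apply, u]
      rw [leibniz_lie, lie_sub]
      abel
    rw [key]
    exact add_mem (LieSubmodule.lie_mem_lie hyx (I.ad_pow_apply_mem x k hw)) ((⁅I, I⁆).lie_mem ih)

end Commutation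

def adMonomials : Set L := {y : L | ∃ k l : ℕ, y = adp ga k (adp gb l ⁅ga, gb⁆)}

theorem lie_ga_mem_adMonomials {y : L} (hy : y ∈ adMonomials) : ⁅ga, y⁆ ∈ adMonomials := by
  obtain ⟨k, l, rfl⟩ := hy
  exact ⟨k + 1, l, by simp only [adp, pow_succ', Module.End.mul_apply, LieAlgebra.ad_apply]⟩

theorem lie_gb_mem_D2_sup_span_adMonomials {y : L} (hy : y ∈ adMonomials) :
    ⁅gb, y⁆ ∈ (D2 : Submodule ℚ L) ⊔ Submodule.span ℚ adMonomials := by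
  obtain ⟨k, l, rfl⟩ := hy
  have hab : ⁅ga, gb⁆ ∈ D1 :=
    LieSubmodule.lie_mem_lie (LieSubmodule.mem_top _) (LieSubmodule.mem_top _)
  have hcomm := D1.lie_ad_pow_sub_ad_pow_lie_mem_lie hab (D1.ad_pow_apply_mem gb l hab) k
  have hshift : adp ga k ⁅gb, adp gb l ⁅ga, gb⁆⁆ ∈ adMonomials :=
    ⟨k, l + 1, by simp only [adp, pow_succ', Module.End.mul_apply, LieAlgebra.ad_apply]⟩
  rw [← sub_add_cancel ⁅gb, adp ga k (adp gb l ⁅ga, gb⁆)⁆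
    (adp ga k ⁅gb, adp gb l ⁅ga, gb⁆⁆)]
  exact add_mem (le_sup_left (a := (D2 : Submodule ℚ L)) hcomm)
    (le_sup_right (a := (D2 : Submodule ℚ L)) (Submodule.subset_span hshift))

theorem lieSpan_ga_gb : LieSubalgebra.lieSpan ℚ L {ga, gb} = ⊤ := by
  convert FreeLieAlgebra.lieSpan_range_of ℚ Bool
  ext x
  constructor
  · rintro (rfl | rfl)
    exacts [⟨true, rfl⟩, ⟨false, rfl⟩]
  · rintro ⟨_ | _, rfl⟩
    exacts [Or.inr rfl, Or.inl rfl]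

theorem lie_generator_mem_D2_sup_span_adMonomials :
    ∀ g ∈ ({ga, gb} : Set L), ∀ p ∈ (D2 : Submodule ℚ L) ⊔ Submodule.span ℚ adMonomials,
      ⁅g, p⁆ ∈ (D2 : Submodule ℚ L) ⊔ Submodule.span ℚ adMonomials := by
  rintro _ (rfl | rfl) p hp
  · exact D2.lie_mem_sup_span (fun y hy => le_sup_right (a := (D2 : Submodule ℚ L))
      (Submodule.subset_span (lie_ga_mem_adMonomials hy))) hp
  · exact D2.lie_mem_sup_span (fun _ => lie_gb_mem_D2_sup_span_adMonomials) hp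

/-- Every element of `[L,L]`, modulo the double commutator, is a linear combination of the
elements `ad(a)^k ad(b)^l ([a,b])` for `k, l ≥ 0`. -/
theorem D1_spanned_by_ad_monomials_mod_D2 :
    (D1 : Submodule ℚ L) ≤
      (D2 : Submodule ℚ L) ⊔
        Submodule.span ℚ {y : L | ∃ k l : ℕ, y = adp ga k (adp gb l ⁅ga, gb⁆)} := by
  let I := ((D2 : Submodule ℚ L) ⊔ Submodule.span ℚ adMonomials).toLieIdealOfLieSpanEqTop
    lieSpan_ga_gb lie_generator_mem_D2_sup_span_adMonomials
  have hab : ⁅ga, gb⁆ ∈ I :=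
    le_sup_right (a := (D2 : Submodule ℚ L)) (Submodule.subset_span ⟨0, 0, rfl⟩)
  have hgen : ∀ g ∈ ({ga, gb} : Set L), ∀ h ∈ ({ga, gb} : Set L), ⁅g, h⁆ ∈ I := by
    rintro _ (rfl | rfl) _ (rfl | rfl)
    · simp
    · exact hab
    · rw [← lie_skew]; exact I.neg_mem hab
    · simp
  exact fun x hx => I.top_lie_top_le_of_lieSpan_eq_top lieSpan_ga_gb hgen hx
end
end

section
/- For k ≥ 1, the derivation ε_{2k} of the free Lie algebra on a, b determined by ε_{2k}(a) = (2/(2k-2)!)·ad(a)^{2k}(b) and ε_{2k}(b) = (2/(2k-2)!)·Σ_{0 ≤ j < k} (-1)^j [ad(a)^j(b), ad(a)^{2k-1-j}(b)] annihilates [a,b]. -/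
noncomputable section

/-! Writing `A j = [ad(x)^j y, ad(x)^(n-j) y]`, the Leibniz rule gives
`[x, [ad(x)^j y, ad(x)^(n-1-j) y]] = A (j+1) + A j`, so the alternating sum over `j < k` telescopes
to `A 0 - (-1)^k A k`. For `n = 2k` the last term is a bracket of an element with itself, and
`A 0 = -[ad(x)^(2k) y, y]`. -/

namespace LieAlgebra

open Finset

variable {R M : Type*} [CommRing R] [LieRing M] [LieAlgebra R M]

lemma lie_lie_ad_pow_apply (x y : M) (i j : ℕ) :
    ⁅x, ⁅(ad R M x ^ i) y, (ad R M x ^ j) y⁆⁆ =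
      ⁅(ad R M x ^ (i + 1)) y, (ad R M x ^ j) y⁆ + ⁅(ad R M x ^ i) y, (ad R M x ^ (j + 1)) y⁆ := by
  rw [leibniz_lie, pow_succ', pow_succ', Module.End.mul_apply, Module.End.mul_apply, ad_apply,
    ad_apply]

lemma sum_range_neg_one_pow_smul_lie_lie_ad_pow (x y : M) {n k : ℕ} (hkn : k ≤ n) :
    ∑ j ∈ range k, (-1 : R) ^ j • ⁅x, ⁅(ad R M x ^ j) y, (ad R M x ^ (n - 1 - j)) y⁆⁆ =
      ⁅y, (ad R M x ^ n) y⁆ - (-1 : R) ^ k • ⁅(ad R M x ^ k) y, (ad R M x ^ (n - k)) y⁆ := by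
  set A : ℕ → M := fun j ↦ (-1 : R) ^ j • ⁅(ad R M x ^ j) y, (ad R M x ^ (n - j)) y⁆
  have hstep : ∀ j ∈ range k,
      (-1 : R) ^ j • ⁅x, ⁅(ad R M x ^ j) y, (ad R M x ^ (n - 1 - j)) y⁆⁆ = A j - A (j + 1) := by
    intro j hjk
    have hj : j < n := (mem_range.mp hjk).trans_le hkn
    rw [lie_lie_ad_pow_apply, show n - 1 - j + 1 = n - j by omega]
    simp only [A, pow_succ, show n - (j + 1) = n - 1 - j by omega]
    module
  rw [sum_congr rfl hstep, sum_range_sub']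
  simp [A]

lemma lie_ad_pow_two_mul_add_lie_sum_eq_zero (x y : M) (k : ℕ) :
    ⁅(ad R M x ^ (2 * k)) y, y⁆ +
      ⁅x, ∑ j ∈ range k, (-1 : R) ^ j • ⁅(ad R M x ^ j) y, (ad R M x ^ (2 * k - 1 - j)) y⁆⁆ = 0 := by
  have hsum := sum_range_neg_one_pow_smul_lie_lie_ad_pow (R := R) x y (by omega : k ≤ 2 * k)
  rw [show 2 * k - k = k by omega, lie_self, smul_zero, sub_zero] at hsum
  simp only [lie_sum, lie_smul, hsum, ← lie_skew y, add_neg_cancel]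

end LieAlgebra

theorem tsunogai_derivation_annihilates_bracket_general (k : ℕ) :
    ⁅(2 / (Nat.factorial (2 * k - 2) : ℚ)) • adp ga (2 * k) gb, gb⁆ +
      ⁅ga, (2 / (Nat.factorial (2 * k - 2) : ℚ)) •
        ∑ j ∈ Finset.range k,
          ((-1 : ℚ)) ^ j • ⁅adp ga j gb, adp ga (2 * k - 1 - j) gb⁆⁆ = 0 := by
  rw [smul_lie, lie_smul, ← smul_add]
  exact smul_eq_zero_of_right _ (LieAlgebra.lie_ad_pow_two_mul_add_lie_sum_eq_zero ga gb k)

/-- Tsunogai's derivation `ε_{2k}` (k ≥ 1), determined on generators by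
`ε_{2k}(a) = (2/(2k-2)!) ad(a)^{2k}(b)` and
`ε_{2k}(b) = (2/(2k-2)!) Σ_{0 ≤ j < k} (-1)^j [ad(a)^j(b), ad(a)^{2k-1-j}(b)]`,
annihilates `[a,b]`: `[ε_{2k}(a), b] + [a, ε_{2k}(b)] = 0`. -/
theorem tsunogai_derivation_annihilates_bracket (k : ℕ) (hk : 1 ≤ k) :
    ⁅(2 / (Nat.factorial (2 * k - 2) : ℚ)) • adp ga (2 * k) gb, gb⁆ +
      ⁅ga, (2 / (Nat.factorial (2 * k - 2) : ℚ)) •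
        ∑ j ∈ Finset.range k,
          ((-1 : ℚ)) ^ j • ⁅adp ga j gb, adp ga (2 * k - 1 - j) gb⁆⁆ = 0 :=
  tsunogai_derivation_annihilates_bracket_general k
end
end
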